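/- Let n ≥ 2, let W ⊆ {(r,s) ∈ ℝ² : r > 0, s² < r²} be open and nonempty, let ψ : W → (0,∞) be smooth, let k₁ ∈ ℝ, and let Ω = {(x,y) ∈ ℝⁿ × ℝⁿ : x, y linearly independent and (‖x‖, ⟨x,y⟩/‖y‖) ∈ W}. Define F(x,y) = ‖y‖·ψ(‖x‖, ⟨x,y⟩/‖y‖) on Ω. Then the equations ∂F/∂x^k(x,y) = k₁·F(x,y)·∂F/∂y^k(x,y) hold for all k = 1,…,n and all (x,y) ∈ Ω if and only if the two equations (1/r)·ψ_r = k₁ ψ ψ_s and ψ_s = k₁(ψ² − s ψ ψ_s) hold at every point (r,s) of W. -/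

import Mathlib

open scoped RealInnerProductSpace

/-- Partial derivative in the first variable `r` of a function on `ℝ × ℝ`. -/
noncomputable def pdr (f : ℝ × ℝ → ℝ) (p : ℝ × ℝ) : ℝ := fderiv ℝ f p (1, 0)

/-- Partial derivative in the second variable `s` of a function on `ℝ × ℝ`. -/
noncomputable def pds (f : ℝ × ℝ → ℝ) (p : ℝ × ℝ) : ℝ := fderiv ℝ f p (0, 1)

/-- The spherically symmetric Finsler metric `F(x,y) = ‖y‖ ψ(‖x‖, ⟨x,y⟩/‖y‖)`. -/
noncomputable def sphMetric {n : ℕ} (ψ : ℝ × ℝ → ℝ)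
    (x y : EuclideanSpace ℝ (Fin n)) : ℝ :=
  ‖y‖ * ψ (‖x‖, ⟪x, y⟫ / ‖y‖)

noncomputable section
variable {n : ℕ}

-- derivative of the norm on Euclidean space
lemma hasFDerivAt_norm_eucl {x : EuclideanSpace ℝ (Fin n)} (hx : x ≠ 0) :
    HasFDerivAt (fun z : EuclideanSpace ℝ (Fin n) => ‖z‖) (‖x‖⁻¹ • innerSL ℝ x) x := by
  have h1 : HasFDerivAt (fun z : EuclideanSpace ℝ (Fin n) => ‖z‖ ^ 2)
      (2 • innerSL ℝ x) x := (hasStrictFDerivAt_norm_sq x).hasFDerivAt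
  have hx2 : (‖x‖:ℝ) ^ 2 ≠ 0 := pow_ne_zero _ (norm_ne_zero_iff.mpr hx)
  have h2 := h1.sqrt hx2
  have hfun : (fun z : EuclideanSpace ℝ (Fin n) => Real.sqrt (‖z‖ ^ 2)) =
      fun z => ‖z‖ := by
    funext z; rw [Real.sqrt_sq (norm_nonneg z)]
  rw [hfun] at h2
  refine h2.congr_fderiv ?_
  ext v
  have : Real.sqrt (‖x‖ ^ 2) = ‖x‖ := Real.sqrt_sq (norm_nonneg x)
  simp [this, smul_smul]
  field_simp

lemma fderiv_pair_apply (f : ℝ × ℝ → ℝ) (p : ℝ × ℝ) (a b : ℝ) :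
    fderiv ℝ f p (a, b) = a * pdr f p + b * pds f p := by
  have h : (a, b) = a • ((1:ℝ), (0:ℝ)) + b • ((0:ℝ), (1:ℝ)) := by simp [Prod.ext_iff]
  rw [h, map_add, map_smul, map_smul]
  rfl

lemma fderiv_x_apply (ψ : ℝ × ℝ → ℝ) {x y : EuclideanSpace ℝ (Fin n)}
    (hx : x ≠ 0) (hy : y ≠ 0)
    (hψd : DifferentiableAt ℝ ψ (‖x‖, ⟪x, y⟫ / ‖y‖)) (k : Fin n) :
    fderiv ℝ (fun x' => sphMetric ψ x' y) x (EuclideanSpace.single k 1) =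
      ‖y‖ * (pdr ψ (‖x‖, ⟪x, y⟫ / ‖y‖) * (x k / ‖x‖) +
        pds ψ (‖x‖, ⟪x, y⟫ / ‖y‖) * (y k / ‖y‖)) := by
  set p : ℝ × ℝ := (‖x‖, ⟪x, y⟫ / ‖y‖) with hp
  have hN : HasFDerivAt (fun z : EuclideanSpace ℝ (Fin n) => ‖z‖)
      (‖x‖⁻¹ • innerSL ℝ x) x := hasFDerivAt_norm_eucl hx
  have hI : HasFDerivAt (fun x' : EuclideanSpace ℝ (Fin n) => ⟪x', y⟫ / ‖y‖)
      (‖y‖⁻¹ • innerSL ℝ y) x := by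
    have : (fun x' : EuclideanSpace ℝ (Fin n) => ⟪x', y⟫ / ‖y‖) =
        fun x' => (‖y‖⁻¹ • innerSL ℝ y) x' := by
      funext x'; simp [real_inner_comm, div_eq_inv_mul, mul_comm]
    rw [this]
    exact (‖y‖⁻¹ • innerSL ℝ y).hasFDerivAt
  have hg : HasFDerivAt (fun x' : EuclideanSpace ℝ (Fin n) => (‖x'‖, ⟪x', y⟫ / ‖y‖))
      ((‖x‖⁻¹ • innerSL ℝ x).prod (‖y‖⁻¹ • innerSL ℝ y)) x := hN.prodMk hI
  have hF : HasFDerivAt (fun x' : EuclideanSpace ℝ (Fin n) => sphMetric ψ x' y)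
      (‖y‖ • ((fderiv ℝ ψ p).comp ((‖x‖⁻¹ • innerSL ℝ x).prod (‖y‖⁻¹ • innerSL ℝ y)))) x := by
    have := ((hψd.hasFDerivAt.comp x hg).const_mul ‖y‖)
    simpa [sphMetric, smul_smul] using this
  rw [hF.fderiv]
  simp only [ContinuousLinearMap.coe_smul', Pi.smul_apply, ContinuousLinearMap.coe_comp',
    Function.comp_apply, ContinuousLinearMap.prod_apply, ContinuousLinearMap.smul_apply,
    innerSL_apply_apply, smul_eq_mul]
  rw [EuclideanSpace.inner_single_right, EuclideanSpace.inner_single_right]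
  rw [fderiv_pair_apply]
  simp [div_eq_inv_mul, mul_comm]

lemma fderiv_y_apply (ψ : ℝ × ℝ → ℝ) {x y : EuclideanSpace ℝ (Fin n)}
    (hy : y ≠ 0)
    (hψd : DifferentiableAt ℝ ψ (‖x‖, ⟪x, y⟫ / ‖y‖)) (k : Fin n) :
    fderiv ℝ (fun y' => sphMetric ψ x y') y (EuclideanSpace.single k 1) =
      (y k / ‖y‖) * ψ (‖x‖, ⟪x, y⟫ / ‖y‖) +
        pds ψ (‖x‖, ⟪x, y⟫ / ‖y‖) * (x k - (⟪x, y⟫ / ‖y‖) * (y k / ‖y‖)) := by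
  set p : ℝ × ℝ := (‖x‖, ⟪x, y⟫ / ‖y‖) with hp
  set u : ℝ := ‖y‖ with hu
  have hu0 : u ≠ 0 := norm_ne_zero_iff.mpr hy
  have hN : HasFDerivAt (fun z : EuclideanSpace ℝ (Fin n) => ‖z‖)
      (u⁻¹ • innerSL ℝ y) y := hasFDerivAt_norm_eucl hy
  have hInv : HasFDerivAt (fun y' : EuclideanSpace ℝ (Fin n) => ‖y'‖⁻¹)
      ((-(u ^ 2)⁻¹) • (u⁻¹ • innerSL ℝ y)) y :=
    (hasDerivAt_inv hu0).comp_hasFDerivAt y hN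
  have hC : HasFDerivAt (fun y' : EuclideanSpace ℝ (Fin n) => ⟪x, y'⟫)
      (innerSL ℝ x) y := (innerSL ℝ x).hasFDerivAt
  have hS : HasFDerivAt (fun y' : EuclideanSpace ℝ (Fin n) => ⟪x, y'⟫ * ‖y'‖⁻¹)
      (⟪x, y⟫ • ((-(u ^ 2)⁻¹) • (u⁻¹ • innerSL ℝ y)) + u⁻¹ • innerSL ℝ x) y := by
    refine (hC.mul hInv).congr_fderiv ?_
    ext v
    simp [hu]
  have hg : HasFDerivAt (fun y' : EuclideanSpace ℝ (Fin n) => (‖x‖, ⟪x, y'⟫ * ‖y'‖⁻¹))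
      ((0 : EuclideanSpace ℝ (Fin n) →L[ℝ] ℝ).prod
        (⟪x, y⟫ • ((-(u ^ 2)⁻¹) • (u⁻¹ • innerSL ℝ y)) + u⁻¹ • innerSL ℝ x)) y :=
    (hasFDerivAt_const _ _).prodMk hS
  have hComp : HasFDerivAt (fun y' : EuclideanSpace ℝ (Fin n) => ψ (‖x‖, ⟪x, y'⟫ * ‖y'‖⁻¹))
      ((fderiv ℝ ψ p).comp ((0 : EuclideanSpace ℝ (Fin n) →L[ℝ] ℝ).prod
        (⟪x, y⟫ • ((-(u ^ 2)⁻¹) • (u⁻¹ • innerSL ℝ y)) + u⁻¹ • innerSL ℝ x))) y := by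
    have hpe : p = (‖x‖, ⟪x, y⟫ * ‖y‖⁻¹) := by rw [hp, div_eq_mul_inv]
    have := hψd.hasFDerivAt
    rw [hpe] at this
    exact this.comp y hg
  have hF : HasFDerivAt (fun y' => sphMetric ψ x y')
      (‖y‖ • ((fderiv ℝ ψ p).comp ((0 : EuclideanSpace ℝ (Fin n) →L[ℝ] ℝ).prod
          (⟪x, y⟫ • ((-(u ^ 2)⁻¹) • (u⁻¹ • innerSL ℝ y)) + u⁻¹ • innerSL ℝ x))) +
        ψ (‖x‖, ⟪x, y⟫ * ‖y‖⁻¹) • (u⁻¹ • innerSL ℝ y)) y := by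
    have := hN.mul hComp
    refine HasFDerivAt.congr_of_eventuallyEq (this.congr_fderiv ?_) ?_
    · ext v
      simp [hu]
    · exact Filter.Eventually.of_forall fun z => by simp [sphMetric, div_eq_mul_inv]
  rw [hF.fderiv]
  simp only [ContinuousLinearMap.add_apply, ContinuousLinearMap.coe_smul', Pi.smul_apply,
    ContinuousLinearMap.coe_comp', Function.comp_apply, ContinuousLinearMap.prod_apply,
    ContinuousLinearMap.zero_apply, ContinuousLinearMap.smul_apply,
    innerSL_apply_apply, smul_eq_mul]
  rw [EuclideanSpace.inner_single_right, EuclideanSpace.inner_single_right]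
  rw [fderiv_pair_apply]
  have hpe : (‖x‖, ⟪x, y⟫ * ‖y‖⁻¹) = p := by rw [hp, div_eq_mul_inv]
  rw [hpe]
  simp only [conj_trivial, ← hu]
  field_simp
  ring



set_option maxHeartbeats 1600000 in
/-- `F = u ψ(r,s)` satisfies `F_{x^k} = k₁ F F_{y^k}` for all `k`
on `Ω` (i.e. is projectively and dually flat) if and only if
`(1/r) ψ_r = k₁ ψ ψ_s` and `ψ_s = k₁ (ψ² − s ψ ψ_s)` on `W`. -/
theorem projectively_and_dually_flat_iff {n : ℕ} (hn : 2 ≤ n)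
    (W : Set (ℝ × ℝ)) (hWopen : IsOpen W) (hWne : W.Nonempty)
    (hWsub : W ⊆ {p : ℝ × ℝ | 0 < p.1 ∧ p.2 ^ 2 < p.1 ^ 2})
    (ψ : ℝ × ℝ → ℝ) (hψ : ContDiffOn ℝ (⊤ : ℕ∞) ψ W) (hψpos : ∀ p ∈ W, 0 < ψ p)
    (k₁ : ℝ) :
    (∀ (k : Fin n) (x y : EuclideanSpace ℝ (Fin n)),
        LinearIndependent ℝ ![x, y] → (‖x‖, ⟪x, y⟫ / ‖y‖) ∈ W →
        fderiv ℝ (fun x' => sphMetric ψ x' y) x (EuclideanSpace.single k 1) =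
          k₁ * sphMetric ψ x y *
            fderiv ℝ (fun y' => sphMetric ψ x y') y (EuclideanSpace.single k 1)) ↔
      (∀ p ∈ W,
        (1 / p.1) * pdr ψ p = k₁ * ψ p * pds ψ p ∧
        pds ψ p = k₁ * ((ψ p) ^ 2 - p.2 * ψ p * pds ψ p)) := by
  have hdiff : ∀ p ∈ W, DifferentiableAt ℝ ψ p := fun p hp =>
    ((hψ p hp).contDiffAt (hWopen.mem_nhds hp)).differentiableAt (by simp)
  constructor
  · -- forward
    intro H p hp
    obtain ⟨r, s⟩ := p
    have hr : 0 < r := (hWsub hp).1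
    have hs2 : s ^ 2 < r ^ 2 := (hWsub hp).2
    have hr0 : r ≠ 0 := ne_of_gt hr
    set t : ℝ := Real.sqrt (r ^ 2 - s ^ 2) with ht
    have ht0 : 0 < t := Real.sqrt_pos.mpr (by linarith)
    have ht0' : t ≠ 0 := ne_of_gt ht0
    have ht2 : t ^ 2 = r ^ 2 - s ^ 2 := Real.sq_sqrt (by linarith)
    have h01 : (0 : ℕ) < n := by omega
    have h11 : (1 : ℕ) < n := by omega
    set i0 : Fin n := ⟨0, h01⟩ with hi0
    set i1 : Fin n := ⟨1, h11⟩ with hi1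
    have hne : i0 ≠ i1 := by simp [hi0, hi1, Fin.ext_iff]
    set e0 : EuclideanSpace ℝ (Fin n) := EuclideanSpace.single i0 1 with he0
    set e1 : EuclideanSpace ℝ (Fin n) := EuclideanSpace.single i1 1 with he1
    set x : EuclideanSpace ℝ (Fin n) := r • e0 with hx
    set y : EuclideanSpace ℝ (Fin n) := s • e0 + t • e1 with hy
    have hxv0 : x i0 = r := by rw [hx]; simp [he0, EuclideanSpace.single_apply]
    have hxv1 : x i1 = 0 := by rw [hx]; simp [he0, EuclideanSpace.single_apply, hne.symm]
    have hyv0 : y i0 = s := by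
      rw [hy]; simp [he0, he1, EuclideanSpace.single_apply, hne]
    have hyv1 : y i1 = t := by
      rw [hy]; simp [he0, he1, EuclideanSpace.single_apply, hne.symm]
    have hxnorm : ‖x‖ = r := by
      rw [hx, norm_smul, he0, EuclideanSpace.norm_single]
      simp [abs_of_pos hr]
    have hinner00 : ⟪e0, e0⟫ = (1:ℝ) := by
      rw [he0, EuclideanSpace.inner_single_right]
      simp [EuclideanSpace.single_apply]
    have hinner01 : ⟪e0, e1⟫ = (0:ℝ) := by
      rw [he1, EuclideanSpace.inner_single_right]
      simp [he0, EuclideanSpace.single_apply, hne.symm, hne]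
    have hinner10 : ⟪e1, e0⟫ = (0:ℝ) := by rw [real_inner_comm]; exact hinner01
    have hinner11 : ⟪e1, e1⟫ = (1:ℝ) := by
      rw [he1, EuclideanSpace.inner_single_right]
      simp [EuclideanSpace.single_apply]
    have hxyinner : ⟪x, y⟫ = r * s := by
      rw [hx, hy]
      rw [inner_add_right, real_inner_smul_left, real_inner_smul_left,
        real_inner_smul_right, real_inner_smul_right, hinner00, hinner01]
      ring
    have hynorm : ‖y‖ = r := by
      have h1 : ⟪y, y⟫ = r ^ 2 := by
        rw [hy]
        simp only [inner_add_left, inner_add_right, real_inner_smul_left,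
          real_inner_smul_right, hinner00, hinner01, hinner10, hinner11]
        nlinarith [ht2]
      have h2 : ‖y‖ ^ 2 = r ^ 2 := by rw [← real_inner_self_eq_norm_sq, h1]
      have h3 : (‖y‖ - r) * (‖y‖ + r) = 0 := by nlinarith
      rcases mul_eq_zero.mp h3 with h | h
      · linarith
      · nlinarith [norm_nonneg y]
    have hsval : ⟪x, y⟫ / ‖y‖ = s := by rw [hxyinner, hynorm]; field_simp
    have hmem : (‖x‖, ⟪x, y⟫ / ‖y‖) ∈ W := by rw [hxnorm, hsval]; exact hp
    have hy0 : y ≠ 0 := by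
      intro h
      rw [h] at hyv1
      simp at hyv1
      exact ht0' hyv1.symm
    have hx0 : x ≠ 0 := by
      intro h
      rw [h] at hxv0
      simp at hxv0
      exact hr0 hxv0.symm
    have hli : LinearIndependent ℝ ![x, y] := by
      rw [LinearIndependent.pair_iff]
      intro a b hab
      have h1 := congrFun (congrArg (fun z : EuclideanSpace ℝ (Fin n) => (z : Fin n → ℝ)) hab) i1
      have h0 := congrFun (congrArg (fun z : EuclideanSpace ℝ (Fin n) => (z : Fin n → ℝ)) hab) i0
      simp only [PiLp.add_apply, PiLp.smul_apply, smul_eq_mul, PiLp.zero_apply] at h1 h0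
      rw [hxv1, hyv1] at h1
      rw [hxv0, hyv0] at h0
      simp at h1
      have hb : b = 0 := by
        rcases h1 with h1 | h1
        · exact h1
        · exact absurd h1 ht0'
      refine ⟨?_, hb⟩
      rw [hb] at h0
      simp at h0
      rcases h0 with h0 | h0
      · exact h0
      · exact absurd h0 hr0
    have hψd : DifferentiableAt ℝ ψ (‖x‖, ⟪x, y⟫ / ‖y‖) := by
      rw [hxnorm, hsval]; exact hdiff (r, s) hp
    set a := pdr ψ (r, s) with hA
    set b := pds ψ (r, s) with hB
    set c := ψ (r, s) with hC
    have key : ∀ k : Fin n,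
        r * (a * (x k / r) + b * (y k / r)) =
        k₁ * (r * c) * ((y k / r) * c + b * (x k - s * (y k / r))) := by
      intro k
      have h := H k x y hli hmem
      rw [fderiv_x_apply ψ hx0 hy0 hψd k, fderiv_y_apply ψ hy0 hψd k] at h
      unfold sphMetric at h
      rw [hxnorm, hsval, hynorm] at h
      exact h
    have E1 := key i1
    have E0 := key i0
    rw [hxv1, hyv1] at E1
    rw [hxv0, hyv0] at E0
    have eq2 : b = k₁ * (c ^ 2 - s * c * b) := by
      have hid : r * (a * (0 / r) + b * (t / r)) -
          k₁ * (r * c) * ((t / r) * c + b * (0 - s * (t / r))) =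
          t * (b - k₁ * (c ^ 2 - s * c * b)) := by
        field_simp
        ring
      rw [E1] at hid
      simp at hid
      rcases hid with h | h
      · exact absurd h ht0'
      · linarith
    have eq1 : (1 / r) * a = k₁ * c * b := by
      have hid : r * (a * (r / r) + b * (s / r)) -
          k₁ * (r * c) * ((s / r) * c + b * (r - s * (s / r))) =
          r * (a - r * (k₁ * c * b)) + s * (b - k₁ * (c ^ 2 - s * c * b)) := by
        field_simp
        ring
      rw [E0] at hid
      rw [← eq2] at hid
      simp at hid
      rcases hid with h | h
      · exact absurd h hr0
      · field_simp
        linarith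
    exact ⟨eq1, eq2⟩
  · -- backward
    intro H k x y hli hmem
    have hx0 : x ≠ 0 := by have := hli.ne_zero 0; simpa using this
    have hy0 : y ≠ 0 := by have := hli.ne_zero 1; simpa using this
    have hψd : DifferentiableAt ℝ ψ (‖x‖, ⟪x, y⟫ / ‖y‖) := hdiff _ hmem
    rw [fderiv_x_apply ψ hx0 hy0 hψd k, fderiv_y_apply ψ hy0 hψd k]
    obtain ⟨eq1, eq2⟩ := H _ hmem
    simp only at eq1 eq2
    set r : ℝ := ‖x‖ with hrdef
    set u : ℝ := ‖y‖ with hudef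
    set s : ℝ := ⟪x, y⟫ / u with hsdef
    have hr : 0 < r := (hWsub hmem).1
    have hu : 0 < u := norm_pos_iff.mpr hy0
    have hr0 : r ≠ 0 := ne_of_gt hr
    have hu0 : u ≠ 0 := ne_of_gt hu
    unfold sphMetric
    set a := pdr ψ (r, s) with hA
    set b := pds ψ (r, s) with hB
    set c := ψ (r, s) with hC
    have ha : a = r * (k₁ * c * b) := by
      field_simp at eq1
      linarith
    have hid : u * (a * (x k / r) + b * (y k / u)) -
        k₁ * (u * c) * ((y k / u) * c + b * (x k - s * (y k / u))) =
        (u / r) * (x k) * (a - r * (k₁ * c * b)) +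
          (y k) * (b - k₁ * (c ^ 2 - s * c * b)) := by
      field_simp
      ring
    rw [← ha] at hid
    rw [← eq2] at hid
    simp at hid
    linarith
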